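/- arXiv:1901.00839 — 5 statements merged into one kernel-verified Lean document; each statement's English description precedes it below -/
import Mathlib

section
/- Let H be a finitely generated free abelian group with a symmetric bilinear form written x·y, let L ∈ H, set κ_γ = L·γ and d = L·L, and let b be an integer. Fix β ∈ H, a finite set S ⊆ H∖{0}, and arbitrary functions N0, N1 : H → ℚ. With the stratum sums D22, D23, D24, D34, D03, D04, D00 and the terms T1, T2, T3, T4 defined as in the context (all sums over ordered decompositions of β with all parts in S), the following identity holds: −2·D22 + (2/3)·D23 + (1/3)·D24 − D34 − (1/6)·D03 − (1/6)·D04 + (1/3)·D00 = T1 + T2 + T3 + T4 − 6·d²·N1(β). In particular, if the left-hand side vanishes (Getzler's relation), then 6·d²·N1(β) = T1 + T2 + T3 + T4, which is the paper's recursive formula (rec_formula). -/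
open Finset

/-- Binomial coefficient with integer arguments, interpreted as `0` out of range. -/
def zChoose (n k : ℤ) : ℚ :=
  if 0 ≤ k ∧ k ≤ n then (Nat.choose n.toNat k.toNat : ℚ) else 0

/-- Trinomial coefficient `n!/(a! b! (n-a-b)!)` with integer arguments, `0` out of range. -/
def zTrinom (n a b : ℤ) : ℚ := zChoose n a * zChoose (n - a) b

section

variable {H : Type*} [AddCommGroup H] [DecidableEq H]

/-- Ordered decompositions `β = β₁ + β₂` with both parts in `S`. -/
def pairsOf (S : Finset H) (β : H) : Finset (H × H) :=
  (S ×ˢ S).filter fun p => p.1 + p.2 = β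

/-- Ordered decompositions `β = β₁ + β₂ + β₃` with all parts in `S`. -/
def triplesOf (S : Finset H) (β : H) : Finset (H × H × H) :=
  (S ×ˢ S ×ˢ S).filter fun t => t.1 + t.2.1 + t.2.2 = β

variable (B : H →ₗ[ℤ] H →ₗ[ℤ] ℤ) (L : H) (b : ℤ) (N0 N1 : H → ℚ) (S : Finset H) (β : H)

/-- Intersection of the pullback of the stratum `δ_{2,2}` with the point/divisor cycle. -/
def D22 : ℚ :=
  3 * (B L L : ℚ) ^ 2 * N1 β
  + 3 * ∑ t ∈ triplesOf S β,
      zTrinom (B L β - 2) (B L t.2.1 - 1) (B L t.2.2 - 1)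
        * (B L t.2.1 : ℚ) ^ 2 * (B L t.2.2 : ℚ) ^ 2
        * (B t.1 t.2.1 : ℚ) * (B t.1 t.2.2 : ℚ)
        * N1 t.1 * N0 t.2.1 * N0 t.2.2
  + 6 * ∑ p ∈ pairsOf S β,
      zChoose (B L β - 2) (B L p.1 - 1)
        * (B L L : ℚ) * (B p.1 p.2 : ℚ) * (B L p.2 : ℚ) ^ 2
        * N1 p.1 * N0 p.2

/-- Intersection of the pullback of the stratum `δ_{2,3}` with the point/divisor cycle. -/
def D23 : ℚ :=
  12 * ∑ t ∈ triplesOf S β,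
      zTrinom (B L β - 2) (B L t.2.1 - 1) (B L t.2.2 - 1)
        * (B L t.1 : ℚ) * (B L t.2.1 : ℚ) * (B L t.2.2 : ℚ) ^ 2
        * (B t.1 t.2.1 : ℚ) * (B t.2.1 t.2.2 : ℚ)
        * N1 t.1 * N0 t.2.1 * N0 t.2.2
  + 12 * ∑ p ∈ pairsOf S β,
      zChoose (B L β - 2) (B L p.1)
        * (B L p.1 : ℚ) * (B L p.2 : ℚ)
        * ((B L L : ℚ) * (B p.1 p.2 : ℚ) + (B L p.1 : ℚ) * (B L p.2 : ℚ))
        * N1 p.1 * N0 p.2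
  + 12 * ∑ p ∈ pairsOf S β,
      zChoose (B L β - 2) (B L p.1 - 1)
        * (B L p.1 : ℚ) * (B L p.2 : ℚ) ^ 3
        * N1 p.1 * N0 p.2

/-- Intersection of the pullback of the stratum `δ_{2,4}` with the point/divisor cycle. -/
def D24 : ℚ :=
  6 * ∑ t ∈ triplesOf S β,
      zTrinom (B L β - 2) (B L t.2.1 - 1) (B L t.2.2 - 1)
        * (B L t.2.1 : ℚ) ^ 2 * (B L t.2.2 : ℚ) ^ 2
        * (B t.1 t.2.1 : ℚ) * (B t.2.1 t.2.2 : ℚ)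
        * N1 t.1 * N0 t.2.1 * N0 t.2.2
  + 6 * ∑ p ∈ pairsOf S β,
      zChoose (B L β - 2) (B L p.1)
        * (B L p.2 : ℚ) ^ 2 * (B L L : ℚ) * (B p.1 p.2 : ℚ)
        * N1 p.1 * N0 p.2
  - (1 / 4) * ∑ p ∈ pairsOf S β,
      zChoose (B L β - 2) (B L p.1 - 1)
        * (B L p.1 : ℚ) ^ 3 * (B L p.2 : ℚ) ^ 2 * (B p.1 p.2 : ℚ)
        * N0 p.1 * N0 p.2
  - (1 / 4) * (B L β : ℚ) ^ 3 * (B L L : ℚ) * N0 β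

/-- Intersection of the pullback of the stratum `δ_{3,4}` with the point/divisor cycle. -/
def D34 : ℚ :=
  4 * ∑ t ∈ triplesOf S β,
      zTrinom (B L β - 2) (B L t.2.1 - 1) (B L t.2.2 - 1)
        * (B L t.2.1 : ℚ) * (B L t.2.2 : ℚ) ^ 3
        * (B t.1 t.2.1 : ℚ) * (B t.2.1 t.2.2 : ℚ)
        * N1 t.1 * N0 t.2.1 * N0 t.2.2
  + 4 * ∑ p ∈ pairsOf S β,
      zChoose (B L β - 2) (B L p.1)
        * (B L p.1 : ℚ) * (B L p.2 : ℚ) ^ 3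
        * N1 p.1 * N0 p.2
  + 4 * ∑ p ∈ pairsOf S β,
      zChoose (B L β - 2) (B L p.1 - 1)
        * (B L p.2 : ℚ) ^ 4
        * N1 p.1 * N0 p.2
  - (1 / 6) * ∑ p ∈ pairsOf S β,
      zChoose (B L β - 2) (B L p.1 - 1)
        * (B L p.1 : ℚ) ^ 2 * (B L p.2 : ℚ) ^ 3 * (B p.1 p.2 : ℚ)
        * N0 p.1 * N0 p.2
  - (1 / 6) * (B L L : ℚ) * (B L β : ℚ) ^ 3 * N0 β

/-- Intersection of the pullback of the stratum `δ_{0,3}` with the point/divisor cycle. -/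
def D03 : ℚ :=
  2 * ∑ p ∈ pairsOf S β,
      zChoose (B L β - 2) (B L p.1 - 1)
        * (B L p.1 : ℚ) * (B L p.2 : ℚ) ^ 3
        * (B p.1 p.2 : ℚ) * (B p.1 p.1 : ℚ)
        * N0 p.1 * N0 p.2

/-- Intersection of the pullback of the stratum `δ_{0,4}` with the point/divisor cycle. -/
def D04 : ℚ :=
  (1 / 2) * ∑ p ∈ pairsOf S β,
      zChoose (B L β - 2) (B L p.1 - 1)
        * (B L p.2 : ℚ) ^ 4 * (B p.1 p.2 : ℚ) * (B p.1 p.1 : ℚ)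
        * N0 p.1 * N0 p.2
  + (1 / 2) * (2 + (b : ℚ)) * (B L β : ℚ) ^ 4 * N0 β

/-- Intersection of the pullback of the stratum `δ_{0,0}` with the point/divisor cycle. -/
def D00 : ℚ :=
  (3 / 2) * ∑ p ∈ pairsOf S β,
      zChoose (B L β - 2) (B L p.1 - 1)
        * (B L p.1 : ℚ) ^ 2 * (B L p.2 : ℚ) ^ 2 * (B p.1 p.2 : ℚ) ^ 2
        * N0 p.1 * N0 p.2

/-- The term `T1` of the paper's recursive formula. -/
def TT1 : ℚ :=
  ∑ t ∈ triplesOf S β,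
    zTrinom (B L β - 2) (B L t.2.1 - 1) (B L t.2.2 - 1)
      * 2 * (B L t.2.1 : ℚ) * (B L t.2.2 : ℚ) ^ 2 * (B t.1 t.2.1 : ℚ)
      * ((4 * (B L t.1 : ℚ) + (B L t.2.1 : ℚ) - 2 * (B L t.2.2 : ℚ)) * (B t.2.1 t.2.2 : ℚ)
          - 3 * (B L t.2.1 : ℚ) * (B t.1 t.2.2 : ℚ))
      * N1 t.1 * N0 t.2.1 * N0 t.2.2

/-- The term `T2` of the paper's recursive formula. -/
def TT2 : ℚ :=
  ∑ p ∈ pairsOf S β,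
    (zChoose (B L β - 2) (B L p.1 - 1) * 4 * (B L p.2 : ℚ) ^ 2
        * (2 * (B L p.1 : ℚ) * (B L p.2 : ℚ) - (B L p.2 : ℚ) ^ 2
            - 3 * (B L L : ℚ) * (B p.1 p.2 : ℚ))
      + zChoose (B L β - 2) (B L p.1) * 2 * (B L p.2 : ℚ)
        * ((B L L : ℚ) * (B p.1 p.2 : ℚ) * (4 * (B L p.1 : ℚ) + (B L p.2 : ℚ))
            + 2 * (B L p.1 : ℚ) * (B L p.2 : ℚ) * (2 * (B L p.1 : ℚ) - (B L p.2 : ℚ))))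
      * N1 p.1 * N0 p.2

/-- The term `T3` of the paper's recursive formula. -/
def TT3 : ℚ :=
  -(1 / 12) * ∑ p ∈ pairsOf S β,
    zChoose (B L β - 2) (B L p.1 - 1)
      * (B L p.2 : ℚ) ^ 2 * (B p.1 p.2 : ℚ)
      * ((B L p.1 : ℚ) ^ 2
            * ((B L p.1 : ℚ) - 2 * (B L p.2 : ℚ) - 6 * (B p.1 p.2 : ℚ))
          + (B L p.2 : ℚ) * (B p.1 p.1 : ℚ) * (4 * (B L p.1 : ℚ) + (B L p.2 : ℚ)))
      * N0 p.1 * N0 p.2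

/-- The term `T4` of the paper's recursive formula. -/
def TT4 : ℚ :=
  -(1 / 12) * (B L β : ℚ) ^ 3 * ((2 + (b : ℚ)) * (B L β : ℚ) - (B L L : ℚ)) * N0 β

/-- Getzler's combination of the seven codimension-two boundary strata of `M̄_{1,4}`,
intersected with the point/divisor cycle, equals `T1 + T2 + T3 + T4 - 6 d² N1(β)`;
in particular, Getzler's relation (the vanishing of this combination) yields the
paper's recursive formula `6 d² N1(β) = T1 + T2 + T3 + T4`. -/
theorem getzler_combination_eq_recursion
    (hfree : Module.Free ℤ H) (hfin : Module.Finite ℤ H)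
    (hsymm : ∀ x y : H, B x y = B y x)
    (hS : (0 : H) ∉ S) :
    (-2 * D22 B L N0 N1 S β + (2 / 3) * D23 B L N0 N1 S β + (1 / 3) * D24 B L N0 N1 S β
        - D34 B L N0 N1 S β - (1 / 6) * D03 B L N0 S β - (1 / 6) * D04 B L b N0 S β
        + (1 / 3) * D00 B L N0 S β
      = TT1 B L N0 N1 S β + TT2 B L N0 N1 S β + TT3 B L N0 S β + TT4 B L b N0 β
        - 6 * (B L L : ℚ) ^ 2 * N1 β) ∧
    (-2 * D22 B L N0 N1 S β + (2 / 3) * D23 B L N0 N1 S β + (1 / 3) * D24 B L N0 N1 S β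
        - D34 B L N0 N1 S β - (1 / 6) * D03 B L N0 S β - (1 / 6) * D04 B L b N0 S β
        + (1 / 3) * D00 B L N0 S β = 0
      → 6 * (B L L : ℚ) ^ 2 * N1 β
        = TT1 B L N0 N1 S β + TT2 B L N0 N1 S β + TT3 B L N0 S β + TT4 B L b N0 β) := by
  have e1 : TT1 B L N0 N1 S β =
      -6 * ∑ t ∈ triplesOf S β,
        zTrinom (B L β - 2) (B L t.2.1 - 1) (B L t.2.2 - 1)
          * (B L t.2.1 : ℚ) ^ 2 * (B L t.2.2 : ℚ) ^ 2
          * (B t.1 t.2.1 : ℚ) * (B t.1 t.2.2 : ℚ)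
          * N1 t.1 * N0 t.2.1 * N0 t.2.2
      + 8 * ∑ t ∈ triplesOf S β,
        zTrinom (B L β - 2) (B L t.2.1 - 1) (B L t.2.2 - 1)
          * (B L t.1 : ℚ) * (B L t.2.1 : ℚ) * (B L t.2.2 : ℚ) ^ 2
          * (B t.1 t.2.1 : ℚ) * (B t.2.1 t.2.2 : ℚ)
          * N1 t.1 * N0 t.2.1 * N0 t.2.2
      + 2 * ∑ t ∈ triplesOf S β,
        zTrinom (B L β - 2) (B L t.2.1 - 1) (B L t.2.2 - 1)
          * (B L t.2.1 : ℚ) ^ 2 * (B L t.2.2 : ℚ) ^ 2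
          * (B t.1 t.2.1 : ℚ) * (B t.2.1 t.2.2 : ℚ)
          * N1 t.1 * N0 t.2.1 * N0 t.2.2
      - 4 * ∑ t ∈ triplesOf S β,
        zTrinom (B L β - 2) (B L t.2.1 - 1) (B L t.2.2 - 1)
          * (B L t.2.1 : ℚ) * (B L t.2.2 : ℚ) ^ 3
          * (B t.1 t.2.1 : ℚ) * (B t.2.1 t.2.2 : ℚ)
          * N1 t.1 * N0 t.2.1 * N0 t.2.2 := by
    unfold TT1
    simp only [Finset.mul_sum, ← Finset.sum_add_distrib, ← Finset.sum_sub_distrib]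
    exact Finset.sum_congr rfl fun t _ => by ring
  have e2 : TT2 B L N0 N1 S β =
      -12 * ∑ p ∈ pairsOf S β,
        zChoose (B L β - 2) (B L p.1 - 1)
          * (B L L : ℚ) * (B p.1 p.2 : ℚ) * (B L p.2 : ℚ) ^ 2
          * N1 p.1 * N0 p.2
      + 8 * ∑ p ∈ pairsOf S β,
        zChoose (B L β - 2) (B L p.1)
          * (B L p.1 : ℚ) * (B L p.2 : ℚ)
          * ((B L L : ℚ) * (B p.1 p.2 : ℚ) + (B L p.1 : ℚ) * (B L p.2 : ℚ))
          * N1 p.1 * N0 p.2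
      + 8 * ∑ p ∈ pairsOf S β,
        zChoose (B L β - 2) (B L p.1 - 1)
          * (B L p.1 : ℚ) * (B L p.2 : ℚ) ^ 3
          * N1 p.1 * N0 p.2
      + 2 * ∑ p ∈ pairsOf S β,
        zChoose (B L β - 2) (B L p.1)
          * (B L p.2 : ℚ) ^ 2 * (B L L : ℚ) * (B p.1 p.2 : ℚ)
          * N1 p.1 * N0 p.2
      - 4 * ∑ p ∈ pairsOf S β,
        zChoose (B L β - 2) (B L p.1)
          * (B L p.1 : ℚ) * (B L p.2 : ℚ) ^ 3
          * N1 p.1 * N0 p.2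
      - 4 * ∑ p ∈ pairsOf S β,
        zChoose (B L β - 2) (B L p.1 - 1)
          * (B L p.2 : ℚ) ^ 4
          * N1 p.1 * N0 p.2 := by
    unfold TT2
    simp only [Finset.mul_sum, ← Finset.sum_add_distrib, ← Finset.sum_sub_distrib]
    exact Finset.sum_congr rfl fun p _ => by ring
  have e3 : TT3 B L N0 S β =
      -(1/12) * ∑ p ∈ pairsOf S β,
        zChoose (B L β - 2) (B L p.1 - 1)
          * (B L p.1 : ℚ) ^ 3 * (B L p.2 : ℚ) ^ 2 * (B p.1 p.2 : ℚ)
          * N0 p.1 * N0 p.2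
      + (1/6) * ∑ p ∈ pairsOf S β,
        zChoose (B L β - 2) (B L p.1 - 1)
          * (B L p.1 : ℚ) ^ 2 * (B L p.2 : ℚ) ^ 3 * (B p.1 p.2 : ℚ)
          * N0 p.1 * N0 p.2
      - (1/3) * ∑ p ∈ pairsOf S β,
        zChoose (B L β - 2) (B L p.1 - 1)
          * (B L p.1 : ℚ) * (B L p.2 : ℚ) ^ 3
          * (B p.1 p.2 : ℚ) * (B p.1 p.1 : ℚ)
          * N0 p.1 * N0 p.2
      - (1/12) * ∑ p ∈ pairsOf S β,
        zChoose (B L β - 2) (B L p.1 - 1)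
          * (B L p.2 : ℚ) ^ 4 * (B p.1 p.2 : ℚ) * (B p.1 p.1 : ℚ)
          * N0 p.1 * N0 p.2
      + (1/2) * ∑ p ∈ pairsOf S β,
        zChoose (B L β - 2) (B L p.1 - 1)
          * (B L p.1 : ℚ) ^ 2 * (B L p.2 : ℚ) ^ 2 * (B p.1 p.2 : ℚ) ^ 2
          * N0 p.1 * N0 p.2 := by
    unfold TT3
    simp only [Finset.mul_sum, ← Finset.sum_add_distrib, ← Finset.sum_sub_distrib]
    exact Finset.sum_congr rfl fun p _ => by ring
  have key : -2 * D22 B L N0 N1 S β + (2 / 3) * D23 B L N0 N1 S β + (1 / 3) * D24 B L N0 N1 S β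
        - D34 B L N0 N1 S β - (1 / 6) * D03 B L N0 S β - (1 / 6) * D04 B L b N0 S β
        + (1 / 3) * D00 B L N0 S β
      = TT1 B L N0 N1 S β + TT2 B L N0 N1 S β + TT3 B L N0 S β + TT4 B L b N0 β
        - 6 * (B L L : ℚ) ^ 2 * N1 β := by
    rw [e1, e2, e3]
    unfold D22 D23 D24 D34 D03 D04 D00 TT4
    ring
  exact ⟨key, fun h => by linarith [key, h]⟩

end
end

section
/- With N0 and N1 the functions on positive integers defined in the context (Kontsevich's genus-zero recursion and the paper's genus-one recursion for ℙ² with initial condition N1(1) = 0), one has N1(4) = 225: there are exactly 225 genus-one quartics through 12 generic points of ℙ². -/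
open Finset

/-- Ordered decompositions of `d` into two positive parts. -/
def pairsP2 (d : ℕ) : Finset (ℕ × ℕ) :=
  (Icc 1 d ×ˢ Icc 1 d).filter fun p => p.1 + p.2 = d

/-- Ordered decompositions of `d` into three positive parts. -/
def triplesP2 (d : ℕ) : Finset (ℕ × ℕ × ℕ) :=
  (Icc 1 d ×ˢ Icc 1 d ×ˢ Icc 1 d).filter fun t => t.1 + t.2.1 + t.2.2 = d

/-- Trinomial coefficient `n! / (a! b! (n-a-b)!)`, zero when out of range. -/
def triChoose (n a b : ℕ) : ℕ := Nat.choose n a * Nat.choose (n - a) b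

/-- The term `T1` of the paper's genus-one recursion, specialized to `ℙ²`. -/
def T1P2 (N0 N1 : ℕ → ℚ) (d : ℕ) : ℚ :=
  ∑ t ∈ triplesP2 d,
    (triChoose (3 * d - 2) (3 * t.2.1 - 1) (3 * t.2.2 - 1) : ℚ)
      * 2 * (3 * (t.2.1 : ℚ)) * (3 * (t.2.2 : ℚ)) ^ 2 * ((t.1 : ℚ) * (t.2.1 : ℚ))
      * ((12 * (t.1 : ℚ) + 3 * (t.2.1 : ℚ) - 6 * (t.2.2 : ℚ)) * ((t.2.1 : ℚ) * (t.2.2 : ℚ))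
          - 9 * (t.2.1 : ℚ) * ((t.1 : ℚ) * (t.2.2 : ℚ)))
      * N1 t.1 * N0 t.2.1 * N0 t.2.2

/-- The term `T2` of the paper's genus-one recursion, specialized to `ℙ²`. -/
def T2P2 (N0 N1 : ℕ → ℚ) (d : ℕ) : ℚ :=
  ∑ p ∈ pairsP2 d,
    ((Nat.choose (3 * d - 2) (3 * p.1 - 1) : ℚ) * 4 * (3 * (p.2 : ℚ)) ^ 2
        * (2 * (3 * (p.1 : ℚ)) * (3 * (p.2 : ℚ)) - (3 * (p.2 : ℚ)) ^ 2
            - 27 * ((p.1 : ℚ) * (p.2 : ℚ)))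
      + (Nat.choose (3 * d - 2) (3 * p.1) : ℚ) * 2 * (3 * (p.2 : ℚ))
        * (9 * ((p.1 : ℚ) * (p.2 : ℚ)) * (12 * (p.1 : ℚ) + 3 * (p.2 : ℚ))
            + 2 * (3 * (p.1 : ℚ)) * (3 * (p.2 : ℚ)) * (6 * (p.1 : ℚ) - 3 * (p.2 : ℚ))))
      * N1 p.1 * N0 p.2

/-- The term `T3` of the paper's genus-one recursion, specialized to `ℙ²`. -/
def T3P2 (N0 : ℕ → ℚ) (d : ℕ) : ℚ :=
  -(1 / 12) * ∑ p ∈ pairsP2 d,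
    (Nat.choose (3 * d - 2) (3 * p.1 - 1) : ℚ) * (3 * (p.2 : ℚ)) ^ 2 * ((p.1 : ℚ) * (p.2 : ℚ))
      * ((3 * (p.1 : ℚ)) ^ 2
            * (3 * (p.1 : ℚ) - 6 * (p.2 : ℚ) - 6 * ((p.1 : ℚ) * (p.2 : ℚ)))
          + 3 * (p.2 : ℚ) * (p.1 : ℚ) ^ 2 * (12 * (p.1 : ℚ) + 3 * (p.2 : ℚ)))
      * N0 p.1 * N0 p.2

/-- The term `T4` of the paper's genus-one recursion, specialized to `ℙ²`. -/
def T4P2 (N0 : ℕ → ℚ) (d : ℕ) : ℚ :=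
  -(1 / 12) * (3 * (d : ℚ)) ^ 3 * (9 * (d : ℚ) - 9) * N0 d

/-- `N1` satisfies the paper's genus-one recursion for `ℙ²` with initial condition
`N1 1 = 0`. -/
def GenusOneRecP2 (N0 N1 : ℕ → ℚ) : Prop :=
  N1 1 = 0 ∧ ∀ d : ℕ, 2 ≤ d →
    486 * N1 d = T1P2 N0 N1 d + T2P2 N0 N1 d + T3P2 N0 d + T4P2 N0 d

/-- Kontsevich's genus-zero recursion for `ℙ²`. -/
def KontsevichRecP2 (N0 : ℕ → ℚ) : Prop :=
  N0 1 = 1 ∧ ∀ d : ℕ, 2 ≤ d →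
    N0 d = ∑ p ∈ pairsP2 d,
      N0 p.1 * N0 p.2 * (p.1 : ℚ) ^ 2 * (p.2 : ℚ)
        * ((p.2 : ℚ) * (Nat.choose (3 * d - 4) (3 * p.1 - 2) : ℚ)
            - (p.1 : ℚ) * (Nat.choose (3 * d - 4) (3 * p.1 - 1) : ℚ))

/-- There are exactly 225 genus-one quartics through 12 generic points of `ℙ²`. -/
theorem genusOne_P2_degree_four (N0 N1 : ℕ → ℚ)
    (hN0 : KontsevichRecP2 N0) (hN1 : GenusOneRecP2 N0 N1) :
    N1 4 = 225 := by
  obtain ⟨h01, h0rec⟩ := hN0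
  obtain ⟨h11, h1rec⟩ := hN1
  have p2 : pairsP2 2 = {(1,1)} := by decide
  have p3 : pairsP2 3 = {(1,2),(2,1)} := by decide
  have p4 : pairsP2 4 = {(1,3),(2,2),(3,1)} := by decide
  have t3 : triplesP2 3 = {(1,1,1)} := by decide
  have t4 : triplesP2 4 = {(1,1,2),(1,2,1),(2,1,1)} := by decide
  have h02 : N0 2 = 1 := by
    have h := h0rec 2 (by norm_num)
    rw [p2] at h
    norm_num [h01, Nat.choose] at h
    exact h
  have h03 : N0 3 = 12 := by
    have h := h0rec 3 (by norm_num)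
    rw [p3] at h
    norm_num [h01, h02, Nat.choose] at h
    linarith
  have h04 : N0 4 = 620 := by
    have h := h0rec 4 (by norm_num)
    rw [p4] at h
    norm_num [h01, h02, h03, Nat.choose] at h
    linarith
  have h12 : N1 2 = 0 := by
    have h := h1rec 2 (by norm_num)
    have ht : triplesP2 2 = ∅ := by decide
    rw [T1P2, T2P2, T3P2, T4P2, ht, p2] at h
    norm_num [h01, h02, h11, triChoose, Nat.choose] at h
    linarith
  have h13 : N1 3 = 1 := by
    have h := h1rec 3 (by norm_num)
    rw [T1P2, T2P2, T3P2, T4P2, t3, p3] at h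
    norm_num [h01, h02, h03, h11, h12, triChoose, Nat.choose] at h
    linarith
  have h := h1rec 4 (by norm_num)
  rw [T1P2, T2P2, T3P2, T4P2, t4, p4] at h
  norm_num [h01, h02, h03, h04, h11, h12, h13, triChoose, Nat.choose] at h
  linarith
end

section
/- With N0 and N1 the functions on positive integers defined in the context (Kontsevich's genus-zero recursion and the paper's genus-one recursion for ℙ² with initial condition N1(1) = 0), one has N1(6) = 57435240: there are exactly 57435240 genus-one sextics through 18 generic points of ℙ². -/
open Finset

set_option maxHeartbeats 1000000

/-- There are exactly 57435240 genus-one sextics through 18 generic points of `ℙ²`. -/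
theorem genusOne_P2_degree_six (N0 N1 : ℕ → ℚ)
    (hN0 : KontsevichRecP2 N0) (hN1 : GenusOneRecP2 N0 N1) :
    N1 6 = 57435240 := by
  obtain ⟨h01, h0r⟩ := hN0
  obtain ⟨h11, h1r⟩ := hN1
  have e02 : N0 2 = 1 := by
    rw [h0r 2 (by norm_num), show pairsP2 2 = {(1,1)} from by decide]
    rw [Finset.sum_singleton]
    norm_num [h01, show Nat.choose 2 1 = 2 from by decide, show Nat.choose 2 2 = 1 from by decide]
  have e03 : N0 3 = 12 := by
    rw [h0r 3 (by norm_num), show pairsP2 3 = {(1,2),(2,1)} from by decide]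
    rw [Finset.sum_insert (by decide), Finset.sum_singleton]
    norm_num [h01, e02, show Nat.choose 5 1 = 5 from by decide, show Nat.choose 5 2 = 10 from by decide, show Nat.choose 5 4 = 5 from by decide, show Nat.choose 5 5 = 1 from by decide]
  have e04 : N0 4 = 620 := by
    rw [h0r 4 (by norm_num), show pairsP2 4 = {(1,3),(2,2),(3,1)} from by decide]
    rw [Finset.sum_insert (by decide), Finset.sum_insert (by decide), Finset.sum_singleton]
    norm_num [h01, e02, e03, show Nat.choose 8 1 = 8 from by decide, show Nat.choose 8 2 = 28 from by decide, show Nat.choose 8 4 = 70 from by decide, show Nat.choose 8 5 = 56 from by decide, show Nat.choose 8 7 = 8 from by decide, show Nat.choose 8 8 = 1 from by decide]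
  have e05 : N0 5 = 87304 := by
    rw [h0r 5 (by norm_num), show pairsP2 5 = {(1,4),(2,3),(3,2),(4,1)} from by decide]
    rw [Finset.sum_insert (by decide), Finset.sum_insert (by decide), Finset.sum_insert (by decide), Finset.sum_singleton]
    norm_num [h01, e02, e03, e04, show Nat.choose 11 1 = 11 from by decide, show Nat.choose 11 2 = 55 from by decide, show Nat.choose 11 4 = 330 from by decide, show Nat.choose 11 5 = 462 from by decide, show Nat.choose 11 7 = 330 from by decide, show Nat.choose 11 8 = 165 from by decide, show Nat.choose 11 10 = 11 from by decide, show Nat.choose 11 11 = 1 from by decide]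
  have e06 : N0 6 = 26312976 := by
    rw [h0r 6 (by norm_num), show pairsP2 6 = {(1,5),(2,4),(3,3),(4,2),(5,1)} from by decide]
    rw [Finset.sum_insert (by decide), Finset.sum_insert (by decide), Finset.sum_insert (by decide), Finset.sum_insert (by decide), Finset.sum_singleton]
    norm_num [h01, e02, e03, e04, e05, show Nat.choose 14 1 = 14 from by decide, show Nat.choose 14 2 = 91 from by decide, show Nat.choose 14 4 = 1001 from by decide, show Nat.choose 14 5 = 2002 from by decide, show Nat.choose 14 7 = 3432 from by decide, show Nat.choose 14 8 = 3003 from by decide, show Nat.choose 14 10 = 1001 from by decide, show Nat.choose 14 11 = 364 from by decide, show Nat.choose 14 13 = 14 from by decide, show Nat.choose 14 14 = 1 from by decide]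
  have t1 : T1P2 N0 N1 2 = 0 := by
    rw [T1P2, show triplesP2 2 = (∅ : Finset (ℕ × ℕ × ℕ)) from by decide]
    rw [Finset.sum_empty]
  have t2 : T2P2 N0 N1 2 = 0 := by
    rw [T2P2, show pairsP2 2 = {(1,1)} from by decide]
    rw [Finset.sum_singleton]
    norm_num [h11, h01, e02, e03, e04, e05, e06, show Nat.choose 4 2 = 6 from by decide, show Nat.choose 4 3 = 4 from by decide]
  have t3 : T3P2 N0 2 = 162 := by
    rw [T3P2, show pairsP2 2 = {(1,1)} from by decide]
    rw [Finset.sum_singleton]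
    norm_num [h01, e02, e03, e04, e05, e06, show Nat.choose 4 2 = 6 from by decide, show Nat.choose 4 3 = 4 from by decide]
  have t4 : T4P2 N0 2 = (-162 : ℚ) := by
    rw [T4P2]; norm_num [e02]
  have e12 : N1 2 = 0 := by
    have h := h1r 2 (by norm_num)
    rw [t1, t2, t3, t4] at h; linarith
  clear t1 t2 t3 t4
  have t1 : T1P2 N0 N1 3 = 0 := by
    rw [T1P2, show triplesP2 3 = {(1,1,1)} from by decide]
    rw [Finset.sum_singleton]
    norm_num [h11, e12, h01, e02, e03, e04, e05, e06, show triChoose 7 2 2 = 210 from by decide]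
  have t2 : T2P2 N0 N1 3 = 0 := by
    rw [T2P2, show pairsP2 3 = {(1,2),(2,1)} from by decide]
    rw [Finset.sum_insert (by decide), Finset.sum_singleton]
    norm_num [h11, e12, h01, e02, e03, e04, e05, e06, show Nat.choose 7 2 = 21 from by decide, show Nat.choose 7 3 = 35 from by decide, show Nat.choose 7 5 = 21 from by decide, show Nat.choose 7 6 = 7 from by decide]
  have t3 : T3P2 N0 3 = 13608 := by
    rw [T3P2, show pairsP2 3 = {(1,2),(2,1)} from by decide]
    rw [Finset.sum_insert (by decide), Finset.sum_singleton]
    norm_num [h01, e02, e03, e04, e05, e06, show Nat.choose 7 2 = 21 from by decide, show Nat.choose 7 3 = 35 from by decide, show Nat.choose 7 5 = 21 from by decide, show Nat.choose 7 6 = 7 from by decide]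
  have t4 : T4P2 N0 3 = (-13122 : ℚ) := by
    rw [T4P2]; norm_num [e03]
  have e13 : N1 3 = 1 := by
    have h := h1r 3 (by norm_num)
    rw [t1, t2, t3, t4] at h; linarith
  clear t1 t2 t3 t4
  have t1 : T1P2 N0 N1 4 = 0 := by
    rw [T1P2, show triplesP2 4 = {(1,1,2),(1,2,1),(2,1,1)} from by decide]
    rw [Finset.sum_insert (by decide), Finset.sum_insert (by decide), Finset.sum_singleton]
    norm_num [h11, e12, e13, h01, e02, e03, e04, e05, e06, show triChoose 10 2 2 = 1260 from by decide, show triChoose 10 2 5 = 2520 from by decide, show triChoose 10 5 2 = 2520 from by decide]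
  have t2 : T2P2 N0 N1 4 = 53460 := by
    rw [T2P2, show pairsP2 4 = {(1,3),(2,2),(3,1)} from by decide]
    rw [Finset.sum_insert (by decide), Finset.sum_insert (by decide), Finset.sum_singleton]
    norm_num [h11, e12, e13, h01, e02, e03, e04, e05, e06, show Nat.choose 10 2 = 45 from by decide, show Nat.choose 10 3 = 120 from by decide, show Nat.choose 10 5 = 252 from by decide, show Nat.choose 10 6 = 210 from by decide, show Nat.choose 10 8 = 45 from by decide, show Nat.choose 10 9 = 10 from by decide]
  have t3 : T3P2 N0 4 = 2466450 := by
    rw [T3P2, show pairsP2 4 = {(1,3),(2,2),(3,1)} from by decide]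
    rw [Finset.sum_insert (by decide), Finset.sum_insert (by decide), Finset.sum_singleton]
    norm_num [h01, e02, e03, e04, e05, e06, show Nat.choose 10 2 = 45 from by decide, show Nat.choose 10 3 = 120 from by decide, show Nat.choose 10 5 = 252 from by decide, show Nat.choose 10 6 = 210 from by decide, show Nat.choose 10 8 = 45 from by decide, show Nat.choose 10 9 = 10 from by decide]
  have t4 : T4P2 N0 4 = (-2410560 : ℚ) := by
    rw [T4P2]; norm_num [e04]
  have e14 : N1 4 = 225 := by
    have h := h1r 4 (by norm_num)
    rw [t1, t2, t3, t4] at h; linarith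
  clear t1 t2 t3 t4
  have t1 : T1P2 N0 N1 5 = 4169880 := by
    rw [T1P2, show triplesP2 5 = {(1,1,3),(1,2,2),(1,3,1),(2,1,2),(2,2,1),(3,1,1)} from by decide]
    rw [Finset.sum_insert (by decide), Finset.sum_insert (by decide), Finset.sum_insert (by decide), Finset.sum_insert (by decide), Finset.sum_insert (by decide), Finset.sum_singleton]
    norm_num [h11, e12, e13, e14, h01, e02, e03, e04, e05, e06, show triChoose 13 2 2 = 4290 from by decide, show triChoose 13 2 5 = 36036 from by decide, show triChoose 13 2 8 = 12870 from by decide, show triChoose 13 5 2 = 36036 from by decide, show triChoose 13 5 5 = 72072 from by decide, show triChoose 13 8 2 = 12870 from by decide]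
  have t2 : T2P2 N0 N1 5 = 44226000 := by
    rw [T2P2, show pairsP2 5 = {(1,4),(2,3),(3,2),(4,1)} from by decide]
    rw [Finset.sum_insert (by decide), Finset.sum_insert (by decide), Finset.sum_insert (by decide), Finset.sum_singleton]
    norm_num [h11, e12, e13, e14, h01, e02, e03, e04, e05, e06, show Nat.choose 13 2 = 78 from by decide, show Nat.choose 13 3 = 286 from by decide, show Nat.choose 13 5 = 1287 from by decide, show Nat.choose 13 6 = 1716 from by decide, show Nat.choose 13 8 = 1287 from by decide, show Nat.choose 13 9 = 715 from by decide, show Nat.choose 13 11 = 78 from by decide, show Nat.choose 13 12 = 13 from by decide]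
  have t3 : T3P2 N0 5 = 877932432 := by
    rw [T3P2, show pairsP2 5 = {(1,4),(2,3),(3,2),(4,1)} from by decide]
    rw [Finset.sum_insert (by decide), Finset.sum_insert (by decide), Finset.sum_insert (by decide), Finset.sum_singleton]
    norm_num [h01, e02, e03, e04, e05, e06, show Nat.choose 13 2 = 78 from by decide, show Nat.choose 13 3 = 286 from by decide, show Nat.choose 13 5 = 1287 from by decide, show Nat.choose 13 6 = 1716 from by decide, show Nat.choose 13 8 = 1287 from by decide, show Nat.choose 13 9 = 715 from by decide, show Nat.choose 13 11 = 78 from by decide, show Nat.choose 13 12 = 13 from by decide]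
  have t4 : T4P2 N0 5 = (-883953000 : ℚ) := by
    rw [T4P2]; norm_num [e05]
  have e15 : N1 5 = 87192 := by
    have h := h1r 5 (by norm_num)
    rw [t1, t2, t3, t4] at h; linarith
  clear t1 t2 t3 t4
  have t1 : T1P2 N0 N1 6 = 7578567360 := by
    rw [T1P2, show triplesP2 6 = {(1,1,4),(1,2,3),(1,3,2),(1,4,1),(2,1,3),(2,2,2),(2,3,1),(3,1,2),(3,2,1),(4,1,1)} from by decide]
    rw [Finset.sum_insert (by decide), Finset.sum_insert (by decide), Finset.sum_insert (by decide), Finset.sum_insert (by decide), Finset.sum_insert (by decide), Finset.sum_insert (by decide), Finset.sum_insert (by decide), Finset.sum_insert (by decide), Finset.sum_insert (by decide), Finset.sum_singleton]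
    norm_num [h11, e12, e13, e14, e15, h01, e02, e03, e04, e05, e06, show triChoose 16 2 2 = 10920 from by decide, show triChoose 16 2 5 = 240240 from by decide, show triChoose 16 2 8 = 360360 from by decide, show triChoose 16 2 11 = 43680 from by decide, show triChoose 16 5 2 = 240240 from by decide, show triChoose 16 5 5 = 2018016 from by decide, show triChoose 16 5 8 = 720720 from by decide, show triChoose 16 8 2 = 360360 from by decide, show triChoose 16 8 5 = 720720 from by decide, show triChoose 16 11 2 = 43680 from by decide]
  have t2 : T2P2 N0 N1 6 = 44791859520 := by
    rw [T2P2, show pairsP2 6 = {(1,5),(2,4),(3,3),(4,2),(5,1)} from by decide]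
    rw [Finset.sum_insert (by decide), Finset.sum_insert (by decide), Finset.sum_insert (by decide), Finset.sum_insert (by decide), Finset.sum_singleton]
    norm_num [h11, e12, e13, e14, e15, h01, e02, e03, e04, e05, e06, show Nat.choose 16 2 = 120 from by decide, show Nat.choose 16 3 = 560 from by decide, show Nat.choose 16 5 = 4368 from by decide, show Nat.choose 16 6 = 8008 from by decide, show Nat.choose 16 8 = 12870 from by decide, show Nat.choose 16 9 = 11440 from by decide, show Nat.choose 16 11 = 4368 from by decide, show Nat.choose 16 12 = 1820 from by decide, show Nat.choose 16 14 = 120 from by decide, show Nat.choose 16 15 = 16 from by decide]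
  have t3 : T3P2 N0 6 = 551007884880 := by
    rw [T3P2, show pairsP2 6 = {(1,5),(2,4),(3,3),(4,2),(5,1)} from by decide]
    rw [Finset.sum_insert (by decide), Finset.sum_insert (by decide), Finset.sum_insert (by decide), Finset.sum_insert (by decide), Finset.sum_singleton]
    norm_num [h01, e02, e03, e04, e05, e06, show Nat.choose 16 2 = 120 from by decide, show Nat.choose 16 3 = 560 from by decide, show Nat.choose 16 5 = 4368 from by decide, show Nat.choose 16 6 = 8008 from by decide, show Nat.choose 16 8 = 12870 from by decide, show Nat.choose 16 9 = 11440 from by decide, show Nat.choose 16 11 = 4368 from by decide, show Nat.choose 16 12 = 1820 from by decide, show Nat.choose 16 14 = 120 from by decide, show Nat.choose 16 15 = 16 from by decide]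
  have t4 : T4P2 N0 6 = (-575464785120 : ℚ) := by
    rw [T4P2]; norm_num [e06]
  have e16 : N1 6 = 57435240 := by
    have h := h1r 6 (by norm_num)
    rw [t1, t2, t3, t4] at h; linarith
  clear t1 t2 t3 t4
  exact e16
end

section
/- With N0 and N1 the functions on positive integers defined in the context (Kontsevich's genus-zero recursion and the paper's genus-one recursion for ℙ² with initial condition N1(1) = 0), one has N1(7) = 60478511040: there are exactly 60478511040 genus-one septics through 21 generic points of ℙ². -/
open Finset

set_option maxHeartbeats 2000000 in
lemma stepN0_2 (N0 : ℕ → ℚ) (h01 : N0 1 = (1 : ℚ))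
    (e : N0 2 = ∑ p ∈ pairsP2 2,
      N0 p.1 * N0 p.2 * (p.1 : ℚ) ^ 2 * (p.2 : ℚ)
        * ((p.2 : ℚ) * (Nat.choose (3 * 2 - 4) (3 * p.1 - 2) : ℚ)
            - (p.1 : ℚ) * (Nat.choose (3 * 2 - 4) (3 * p.1 - 1) : ℚ))) :
    N0 2 = (1 : ℚ) := by
  rw [show pairsP2 2 = ({(1,1)} : Finset (ℕ × ℕ)) from by decide] at e
  repeat rw [Finset.sum_insert (by decide)] at e
  simp only [Finset.sum_singleton, Finset.sum_empty] at e
  norm_num [show Nat.choose 2 1 = 2 from by decide, show Nat.choose 2 2 = 1 from by decide, h01] at e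
  linarith [e]

set_option maxHeartbeats 2000000 in
lemma stepN0_3 (N0 : ℕ → ℚ) (h01 : N0 1 = (1 : ℚ)) (h02 : N0 2 = (1 : ℚ))
    (e : N0 3 = ∑ p ∈ pairsP2 3,
      N0 p.1 * N0 p.2 * (p.1 : ℚ) ^ 2 * (p.2 : ℚ)
        * ((p.2 : ℚ) * (Nat.choose (3 * 3 - 4) (3 * p.1 - 2) : ℚ)
            - (p.1 : ℚ) * (Nat.choose (3 * 3 - 4) (3 * p.1 - 1) : ℚ))) :
    N0 3 = (12 : ℚ) := by
  rw [show pairsP2 3 = ({(1,2),(2,1)} : Finset (ℕ × ℕ)) from by decide] at e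
  repeat rw [Finset.sum_insert (by decide)] at e
  simp only [Finset.sum_singleton, Finset.sum_empty] at e
  norm_num [show Nat.choose 5 1 = 5 from by decide, show Nat.choose 5 2 = 10 from by decide, show Nat.choose 5 4 = 5 from by decide, show Nat.choose 5 5 = 1 from by decide, h01, h02] at e
  linarith [e]

set_option maxHeartbeats 2000000 in
lemma stepN0_4 (N0 : ℕ → ℚ) (h01 : N0 1 = (1 : ℚ)) (h02 : N0 2 = (1 : ℚ)) (h03 : N0 3 = (12 : ℚ))
    (e : N0 4 = ∑ p ∈ pairsP2 4,
      N0 p.1 * N0 p.2 * (p.1 : ℚ) ^ 2 * (p.2 : ℚ)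
        * ((p.2 : ℚ) * (Nat.choose (3 * 4 - 4) (3 * p.1 - 2) : ℚ)
            - (p.1 : ℚ) * (Nat.choose (3 * 4 - 4) (3 * p.1 - 1) : ℚ))) :
    N0 4 = (620 : ℚ) := by
  rw [show pairsP2 4 = ({(1,3),(2,2),(3,1)} : Finset (ℕ × ℕ)) from by decide] at e
  repeat rw [Finset.sum_insert (by decide)] at e
  simp only [Finset.sum_singleton, Finset.sum_empty] at e
  norm_num [show Nat.choose 8 1 = 8 from by decide, show Nat.choose 8 2 = 28 from by decide, show Nat.choose 8 4 = 70 from by decide, show Nat.choose 8 5 = 56 from by decide, show Nat.choose 8 7 = 8 from by decide, show Nat.choose 8 8 = 1 from by decide, h01, h02, h03] at e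
  linarith [e]

set_option maxHeartbeats 2000000 in
lemma stepN0_5 (N0 : ℕ → ℚ) (h01 : N0 1 = (1 : ℚ)) (h02 : N0 2 = (1 : ℚ)) (h03 : N0 3 = (12 : ℚ)) (h04 : N0 4 = (620 : ℚ))
    (e : N0 5 = ∑ p ∈ pairsP2 5,
      N0 p.1 * N0 p.2 * (p.1 : ℚ) ^ 2 * (p.2 : ℚ)
        * ((p.2 : ℚ) * (Nat.choose (3 * 5 - 4) (3 * p.1 - 2) : ℚ)
            - (p.1 : ℚ) * (Nat.choose (3 * 5 - 4) (3 * p.1 - 1) : ℚ))) :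
    N0 5 = (87304 : ℚ) := by
  rw [show pairsP2 5 = ({(1,4),(2,3),(3,2),(4,1)} : Finset (ℕ × ℕ)) from by decide] at e
  repeat rw [Finset.sum_insert (by decide)] at e
  simp only [Finset.sum_singleton, Finset.sum_empty] at e
  norm_num [show Nat.choose 11 1 = 11 from by decide, show Nat.choose 11 2 = 55 from by decide, show Nat.choose 11 4 = 330 from by decide, show Nat.choose 11 5 = 462 from by decide, show Nat.choose 11 7 = 330 from by decide, show Nat.choose 11 8 = 165 from by decide, show Nat.choose 11 10 = 11 from by decide, show Nat.choose 11 11 = 1 from by decide, h01, h02, h03, h04] at e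
  linarith [e]

set_option maxHeartbeats 2000000 in
lemma stepN0_6 (N0 : ℕ → ℚ) (h01 : N0 1 = (1 : ℚ)) (h02 : N0 2 = (1 : ℚ)) (h03 : N0 3 = (12 : ℚ)) (h04 : N0 4 = (620 : ℚ)) (h05 : N0 5 = (87304 : ℚ))
    (e : N0 6 = ∑ p ∈ pairsP2 6,
      N0 p.1 * N0 p.2 * (p.1 : ℚ) ^ 2 * (p.2 : ℚ)
        * ((p.2 : ℚ) * (Nat.choose (3 * 6 - 4) (3 * p.1 - 2) : ℚ)
            - (p.1 : ℚ) * (Nat.choose (3 * 6 - 4) (3 * p.1 - 1) : ℚ))) :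
    N0 6 = (26312976 : ℚ) := by
  rw [show pairsP2 6 = ({(1,5),(2,4),(3,3),(4,2),(5,1)} : Finset (ℕ × ℕ)) from by decide] at e
  repeat rw [Finset.sum_insert (by decide)] at e
  simp only [Finset.sum_singleton, Finset.sum_empty] at e
  norm_num [show Nat.choose 14 1 = 14 from by decide, show Nat.choose 14 2 = 91 from by decide, show Nat.choose 14 4 = 1001 from by decide, show Nat.choose 14 5 = 2002 from by decide, show Nat.choose 14 7 = 3432 from by decide, show Nat.choose 14 8 = 3003 from by decide, show Nat.choose 14 10 = 1001 from by decide, show Nat.choose 14 11 = 364 from by decide, show Nat.choose 14 13 = 14 from by decide, show Nat.choose 14 14 = 1 from by decide, h01, h02, h03, h04, h05] at e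
  linarith [e]

set_option maxHeartbeats 2000000 in
lemma stepN0_7 (N0 : ℕ → ℚ) (h01 : N0 1 = (1 : ℚ)) (h02 : N0 2 = (1 : ℚ)) (h03 : N0 3 = (12 : ℚ)) (h04 : N0 4 = (620 : ℚ)) (h05 : N0 5 = (87304 : ℚ)) (h06 : N0 6 = (26312976 : ℚ))
    (e : N0 7 = ∑ p ∈ pairsP2 7,
      N0 p.1 * N0 p.2 * (p.1 : ℚ) ^ 2 * (p.2 : ℚ)
        * ((p.2 : ℚ) * (Nat.choose (3 * 7 - 4) (3 * p.1 - 2) : ℚ)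
            - (p.1 : ℚ) * (Nat.choose (3 * 7 - 4) (3 * p.1 - 1) : ℚ))) :
    N0 7 = (14616808192 : ℚ) := by
  rw [show pairsP2 7 = ({(1,6),(2,5),(3,4),(4,3),(5,2),(6,1)} : Finset (ℕ × ℕ)) from by decide] at e
  repeat rw [Finset.sum_insert (by decide)] at e
  simp only [Finset.sum_singleton, Finset.sum_empty] at e
  norm_num [show Nat.choose 17 1 = 17 from by decide, show Nat.choose 17 2 = 136 from by decide, show Nat.choose 17 4 = 2380 from by decide, show Nat.choose 17 5 = 6188 from by decide, show Nat.choose 17 7 = 19448 from by decide, show Nat.choose 17 8 = 24310 from by decide, show Nat.choose 17 10 = 19448 from by decide, show Nat.choose 17 11 = 12376 from by decide, show Nat.choose 17 13 = 2380 from by decide, show Nat.choose 17 14 = 680 from by decide, show Nat.choose 17 16 = 17 from by decide, show Nat.choose 17 17 = 1 from by decide, h01, h02, h03, h04, h05, h06] at e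
  linarith [e]

set_option maxHeartbeats 2000000 in
lemma stepN1_2 (N0 N1 : ℕ → ℚ) (h01 : N0 1 = (1 : ℚ)) (h02 : N0 2 = (1 : ℚ)) (h11 : N1 1 = (0 : ℚ))
    (e : 486 * N1 2 = T1P2 N0 N1 2 + T2P2 N0 N1 2 + T3P2 N0 2 + T4P2 N0 2) :
    N1 2 = (0 : ℚ) := by
  simp only [T1P2, T2P2, T3P2, T4P2] at e
  rw [show triplesP2 2 = (∅ : Finset (ℕ × ℕ × ℕ)) from by decide,
      show pairsP2 2 = ({(1,1)} : Finset (ℕ × ℕ)) from by decide] at e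
  repeat rw [Finset.sum_insert (by decide)] at e
  simp only [Finset.sum_singleton, Finset.sum_empty] at e
  norm_num [show Nat.choose 4 2 = 6 from by decide, show Nat.choose 4 3 = 4 from by decide, h01, h02, h11] at e
  linarith [e]

set_option maxHeartbeats 2000000 in
lemma stepN1_3 (N0 N1 : ℕ → ℚ) (h01 : N0 1 = (1 : ℚ)) (h02 : N0 2 = (1 : ℚ)) (h03 : N0 3 = (12 : ℚ)) (h11 : N1 1 = (0 : ℚ)) (h12 : N1 2 = (0 : ℚ))
    (e : 486 * N1 3 = T1P2 N0 N1 3 + T2P2 N0 N1 3 + T3P2 N0 3 + T4P2 N0 3) :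
    N1 3 = (1 : ℚ) := by
  simp only [T1P2, T2P2, T3P2, T4P2] at e
  rw [show triplesP2 3 = ({(1,1,1)} : Finset (ℕ × ℕ × ℕ)) from by decide,
      show pairsP2 3 = ({(1,2),(2,1)} : Finset (ℕ × ℕ)) from by decide] at e
  repeat rw [Finset.sum_insert (by decide)] at e
  simp only [Finset.sum_singleton, Finset.sum_empty] at e
  norm_num [show triChoose 7 2 2 = 210 from by decide, show Nat.choose 7 2 = 21 from by decide, show Nat.choose 7 3 = 35 from by decide, show Nat.choose 7 5 = 21 from by decide, show Nat.choose 7 6 = 7 from by decide, h01, h02, h03, h11, h12] at e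
  linarith [e]

set_option maxHeartbeats 2000000 in
lemma stepN1_4 (N0 N1 : ℕ → ℚ) (h01 : N0 1 = (1 : ℚ)) (h02 : N0 2 = (1 : ℚ)) (h03 : N0 3 = (12 : ℚ)) (h04 : N0 4 = (620 : ℚ)) (h11 : N1 1 = (0 : ℚ)) (h12 : N1 2 = (0 : ℚ)) (h13 : N1 3 = (1 : ℚ))
    (e : 486 * N1 4 = T1P2 N0 N1 4 + T2P2 N0 N1 4 + T3P2 N0 4 + T4P2 N0 4) :
    N1 4 = (225 : ℚ) := by
  simp only [T1P2, T2P2, T3P2, T4P2] at e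
  rw [show triplesP2 4 = ({(1,1,2),(1,2,1),(2,1,1)} : Finset (ℕ × ℕ × ℕ)) from by decide,
      show pairsP2 4 = ({(1,3),(2,2),(3,1)} : Finset (ℕ × ℕ)) from by decide] at e
  repeat rw [Finset.sum_insert (by decide)] at e
  simp only [Finset.sum_singleton, Finset.sum_empty] at e
  norm_num [show triChoose 10 2 2 = 1260 from by decide, show triChoose 10 2 5 = 2520 from by decide, show triChoose 10 5 2 = 2520 from by decide, show Nat.choose 10 2 = 45 from by decide, show Nat.choose 10 3 = 120 from by decide, show Nat.choose 10 5 = 252 from by decide, show Nat.choose 10 6 = 210 from by decide, show Nat.choose 10 8 = 45 from by decide, show Nat.choose 10 9 = 10 from by decide, h01, h02, h03, h04, h11, h12, h13] at e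
  linarith [e]

set_option maxHeartbeats 2000000 in
lemma stepN1_5 (N0 N1 : ℕ → ℚ) (h01 : N0 1 = (1 : ℚ)) (h02 : N0 2 = (1 : ℚ)) (h03 : N0 3 = (12 : ℚ)) (h04 : N0 4 = (620 : ℚ)) (h05 : N0 5 = (87304 : ℚ)) (h11 : N1 1 = (0 : ℚ)) (h12 : N1 2 = (0 : ℚ)) (h13 : N1 3 = (1 : ℚ)) (h14 : N1 4 = (225 : ℚ))
    (e : 486 * N1 5 = T1P2 N0 N1 5 + T2P2 N0 N1 5 + T3P2 N0 5 + T4P2 N0 5) :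
    N1 5 = (87192 : ℚ) := by
  simp only [T1P2, T2P2, T3P2, T4P2] at e
  rw [show triplesP2 5 = ({(1,1,3),(1,2,2),(1,3,1),(2,1,2),(2,2,1),(3,1,1)} : Finset (ℕ × ℕ × ℕ)) from by decide,
      show pairsP2 5 = ({(1,4),(2,3),(3,2),(4,1)} : Finset (ℕ × ℕ)) from by decide] at e
  repeat rw [Finset.sum_insert (by decide)] at e
  simp only [Finset.sum_singleton, Finset.sum_empty] at e
  norm_num [show triChoose 13 2 2 = 4290 from by decide, show triChoose 13 2 5 = 36036 from by decide, show triChoose 13 2 8 = 12870 from by decide, show triChoose 13 5 2 = 36036 from by decide, show triChoose 13 5 5 = 72072 from by decide, show triChoose 13 8 2 = 12870 from by decide, show Nat.choose 13 2 = 78 from by decide, show Nat.choose 13 3 = 286 from by decide, show Nat.choose 13 5 = 1287 from by decide, show Nat.choose 13 6 = 1716 from by decide, show Nat.choose 13 8 = 1287 from by decide, show Nat.choose 13 9 = 715 from by decide, show Nat.choose 13 11 = 78 from by decide, show Nat.choose 13 12 = 13 from by decide, h01, h02, h03, h04, h05, h11, h12, h13, h14] at e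
  linarith [e]

set_option maxHeartbeats 2000000 in
lemma stepN1_6 (N0 N1 : ℕ → ℚ) (h01 : N0 1 = (1 : ℚ)) (h02 : N0 2 = (1 : ℚ)) (h03 : N0 3 = (12 : ℚ)) (h04 : N0 4 = (620 : ℚ)) (h05 : N0 5 = (87304 : ℚ)) (h06 : N0 6 = (26312976 : ℚ)) (h11 : N1 1 = (0 : ℚ)) (h12 : N1 2 = (0 : ℚ)) (h13 : N1 3 = (1 : ℚ)) (h14 : N1 4 = (225 : ℚ)) (h15 : N1 5 = (87192 : ℚ))
    (e : 486 * N1 6 = T1P2 N0 N1 6 + T2P2 N0 N1 6 + T3P2 N0 6 + T4P2 N0 6) :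
    N1 6 = (57435240 : ℚ) := by
  simp only [T1P2, T2P2, T3P2, T4P2] at e
  rw [show triplesP2 6 = ({(1,1,4),(1,2,3),(1,3,2),(1,4,1),(2,1,3),(2,2,2),(2,3,1),(3,1,2),(3,2,1),(4,1,1)} : Finset (ℕ × ℕ × ℕ)) from by decide,
      show pairsP2 6 = ({(1,5),(2,4),(3,3),(4,2),(5,1)} : Finset (ℕ × ℕ)) from by decide] at e
  repeat rw [Finset.sum_insert (by decide)] at e
  simp only [Finset.sum_singleton, Finset.sum_empty] at e
  norm_num [show triChoose 16 2 2 = 10920 from by decide, show triChoose 16 2 5 = 240240 from by decide, show triChoose 16 2 8 = 360360 from by decide, show triChoose 16 2 11 = 43680 from by decide, show triChoose 16 5 2 = 240240 from by decide, show triChoose 16 5 5 = 2018016 from by decide, show triChoose 16 5 8 = 720720 from by decide, show triChoose 16 8 2 = 360360 from by decide, show triChoose 16 8 5 = 720720 from by decide, show triChoose 16 11 2 = 43680 from by decide, show Nat.choose 16 2 = 120 from by decide, show Nat.choose 16 3 = 560 from by decide, show Nat.choose 16 5 = 4368 from by decide, show Nat.choose 16 6 = 8008 from by decide, show Nat.choose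 16 8 = 12870 from by decide, show Nat.choose 16 9 = 11440 from by decide, show Nat.choose 16 11 = 4368 from by decide, show Nat.choose 16 12 = 1820 from by decide, show Nat.choose 16 14 = 120 from by decide, show Nat.choose 16 15 = 16 from by decide, h01, h02, h03, h04, h05, h06, h11, h12, h13, h14, h15] at e
  linarith [e]

set_option maxHeartbeats 2000000 in
lemma stepN1_7 (N0 N1 : ℕ → ℚ) (h01 : N0 1 = (1 : ℚ)) (h02 : N0 2 = (1 : ℚ)) (h03 : N0 3 = (12 : ℚ)) (h04 : N0 4 = (620 : ℚ)) (h05 : N0 5 = (87304 : ℚ)) (h06 : N0 6 = (26312976 : ℚ)) (h07 : N0 7 = (14616808192 : ℚ)) (h11 : N1 1 = (0 : ℚ)) (h12 : N1 2 = (0 : ℚ)) (h13 : N1 3 = (1 : ℚ)) (h14 : N1 4 = (225 : ℚ)) (h15 : N1 5 = (87192 : ℚ)) (h16 : N1 6 = (57435240 : ℚ))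
    (e : 486 * N1 7 = T1P2 N0 N1 7 + T2P2 N0 N1 7 + T3P2 N0 7 + T4P2 N0 7) :
    N1 7 = (60478511040 : ℚ) := by
  simp only [T1P2, T2P2, T3P2, T4P2] at e
  rw [show triplesP2 7 = ({(1,1,5),(1,2,4),(1,3,3),(1,4,2),(1,5,1),(2,1,4),(2,2,3),(2,3,2),(2,4,1),(3,1,3),(3,2,2),(3,3,1),(4,1,2),(4,2,1),(5,1,1)} : Finset (ℕ × ℕ × ℕ)) from by decide,
      show pairsP2 7 = ({(1,6),(2,5),(3,4),(4,3),(5,2),(6,1)} : Finset (ℕ × ℕ)) from by decide] at e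
  repeat rw [Finset.sum_insert (by decide)] at e
  simp only [Finset.sum_singleton, Finset.sum_empty] at e
  norm_num [show triChoose 19 2 2 = 23256 from by decide, show triChoose 19 2 5 = 1058148 from by decide, show triChoose 19 2 8 = 4157010 from by decide, show triChoose 19 2 11 = 2116296 from by decide, show triChoose 19 2 14 = 116280 from by decide, show triChoose 19 5 2 = 1058148 from by decide, show triChoose 19 5 5 = 23279256 from by decide, show triChoose 19 5 8 = 34918884 from by decide, show triChoose 19 5 11 = 4232592 from by decide, show triChoose 19 8 2 = 4157010 from by decide, show triChoose 19 8 5 = 34918884 from by decide, show triChoose 19 8 8 = 12471030 from by decide, show triChoose 19 11 2 = 2116296 from by decide, show triChoose 19 11 5 = 4232592 from by decide, show triChoose 19 14 2 = 116280 from by decide, show Nat.choose 19 2 = 171 from by decide, show Nat.choose 19 3 = 969 from by decide, show Nat.choose 19 5 = 11628 from by decide, show Nat.choose 19 6 = 27132 from by decide, show Nat.choose 19 8 = 75582 from by decide, show Nat.choose 19 9 = 92378 from by decide, show Nat.choose 19 11 = 75582 from by decide, show Nat.choose 19 12 = 50388 from by decide, show Nat.choose 19 14 = 11628 from by decide, show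 Nat.choose 19 15 = 3876 from by decide, show Nat.choose 19 17 = 171 from by decide, show Nat.choose 19 18 = 19 from by decide, h01, h02, h03, h04, h05, h06, h07, h11, h12, h13, h14, h15, h16] at e
  linarith [e]

/-- There are exactly 60478511040 genus-one septics through 21 generic points of `ℙ²`. -/
theorem genusOne_P2_degree_seven (N0 N1 : ℕ → ℚ)
    (hN0 : KontsevichRecP2 N0) (hN1 : GenusOneRecP2 N0 N1) :
    N1 7 = 60478511040 := by
  obtain ⟨h01, h0rec⟩ := hN0
  obtain ⟨h11, h1rec⟩ := hN1
  have h02 := stepN0_2 N0 h01 (h0rec 2 (by norm_num))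
  have h03 := stepN0_3 N0 h01 h02 (h0rec 3 (by norm_num))
  have h04 := stepN0_4 N0 h01 h02 h03 (h0rec 4 (by norm_num))
  have h05 := stepN0_5 N0 h01 h02 h03 h04 (h0rec 5 (by norm_num))
  have h06 := stepN0_6 N0 h01 h02 h03 h04 h05 (h0rec 6 (by norm_num))
  have h07 := stepN0_7 N0 h01 h02 h03 h04 h05 h06 (h0rec 7 (by norm_num))
  have h12 := stepN1_2 N0 N1 h01 h02 h11 (h1rec 2 (by norm_num))
  have h13 := stepN1_3 N0 N1 h01 h02 h03 h11 h12 (h1rec 3 (by norm_num))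
  have h14 := stepN1_4 N0 N1 h01 h02 h03 h04 h11 h12 h13 (h1rec 4 (by norm_num))
  have h15 := stepN1_5 N0 N1 h01 h02 h03 h04 h05 h11 h12 h13 h14 (h1rec 5 (by norm_num))
  have h16 := stepN1_6 N0 N1 h01 h02 h03 h04 h05 h06 h11 h12 h13 h14 h15 (h1rec 6 (by norm_num))
  have h17 := stepN1_7 N0 N1 h01 h02 h03 h04 h05 h06 h07 h11 h12 h13 h14 h15 h16 (h1rec 7 (by norm_num))
  exact h17
end

section
/- With N0 and N1 as in the context (the genus-zero invariants of ℙ¹×ℙ¹ in low bidegrees and the unique solution of the paper's genus-one recursion for ℙ¹×ℙ¹ with initial conditions N1(1,0) = N1(0,1) = 0), one has N1(2,1) = 0: the genus-one Gromov–Witten invariant of ℙ¹×ℙ¹ in bidegree (2,1) vanishes. -/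
open Finset

/-- The intersection pairing on `H_2(ℙ¹×ℙ¹)`: `(a1,b1)·(a2,b2) = a1 b2 + a2 b1`. -/
def dotQ (x y : ℕ × ℕ) : ℚ := ((x.1 * y.2 + x.2 * y.1 : ℕ) : ℚ)

/-- `κ_(a,b) = c₁(T(ℙ¹×ℙ¹)) · (a,b) = 2a + 2b`. -/
def kapQ (x : ℕ × ℕ) : ℕ := 2 * x.1 + 2 * x.2

/-- Ordered decompositions of `β` into two nonzero effective classes. -/
def pairsQ (β : ℕ × ℕ) : Finset ((ℕ × ℕ) × (ℕ × ℕ)) :=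
  (Icc (0, 0) β ×ˢ Icc (0, 0) β).filter
    fun p => p.1 + p.2 = β ∧ p.1 ≠ (0, 0) ∧ p.2 ≠ (0, 0)

/-- Ordered decompositions of `β` into three nonzero effective classes. -/
def triplesQ (β : ℕ × ℕ) : Finset ((ℕ × ℕ) × (ℕ × ℕ) × (ℕ × ℕ)) :=
  (Icc (0, 0) β ×ˢ Icc (0, 0) β ×ˢ Icc (0, 0) β).filter
    fun t => t.1 + t.2.1 + t.2.2 = β ∧ t.1 ≠ (0, 0) ∧ t.2.1 ≠ (0, 0) ∧ t.2.2 ≠ (0, 0)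

/-- The term `T1` of the paper's genus-one recursion, specialized to `ℙ¹×ℙ¹`. -/
def T1Q (N0 N1 : ℕ × ℕ → ℚ) (β : ℕ × ℕ) : ℚ :=
  ∑ t ∈ triplesQ β,
    (triChoose (kapQ β - 2) (kapQ t.2.1 - 1) (kapQ t.2.2 - 1) : ℚ)
      * 2 * (kapQ t.2.1 : ℚ) * (kapQ t.2.2 : ℚ) ^ 2 * dotQ t.1 t.2.1
      * ((4 * (kapQ t.1 : ℚ) + (kapQ t.2.1 : ℚ) - 2 * (kapQ t.2.2 : ℚ)) * dotQ t.2.1 t.2.2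
          - 3 * (kapQ t.2.1 : ℚ) * dotQ t.1 t.2.2)
      * N1 t.1 * N0 t.2.1 * N0 t.2.2

/-- The term `T2` of the paper's genus-one recursion, specialized to `ℙ¹×ℙ¹`. -/
def T2Q (N0 N1 : ℕ × ℕ → ℚ) (β : ℕ × ℕ) : ℚ :=
  ∑ p ∈ pairsQ β,
    ((Nat.choose (kapQ β - 2) (kapQ p.1 - 1) : ℚ) * 4 * (kapQ p.2 : ℚ) ^ 2
        * (2 * (kapQ p.1 : ℚ) * (kapQ p.2 : ℚ) - (kapQ p.2 : ℚ) ^ 2 - 24 * dotQ p.1 p.2)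
      + (Nat.choose (kapQ β - 2) (kapQ p.1) : ℚ) * 2 * (kapQ p.2 : ℚ)
        * (8 * dotQ p.1 p.2 * (4 * (kapQ p.1 : ℚ) + (kapQ p.2 : ℚ))
            + 2 * (kapQ p.1 : ℚ) * (kapQ p.2 : ℚ) * (2 * (kapQ p.1 : ℚ) - (kapQ p.2 : ℚ))))
      * N1 p.1 * N0 p.2

/-- The term `T3` of the paper's genus-one recursion, specialized to `ℙ¹×ℙ¹`. -/
def T3Q (N0 : ℕ × ℕ → ℚ) (β : ℕ × ℕ) : ℚ :=
  -(1 / 12) * ∑ p ∈ pairsQ β,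
    (Nat.choose (kapQ β - 2) (kapQ p.1 - 1) : ℚ) * (kapQ p.2 : ℚ) ^ 2 * dotQ p.1 p.2
      * ((kapQ p.1 : ℚ) ^ 2
            * ((kapQ p.1 : ℚ) - 2 * (kapQ p.2 : ℚ) - 6 * dotQ p.1 p.2)
          + (kapQ p.2 : ℚ) * dotQ p.1 p.1 * (4 * (kapQ p.1 : ℚ) + (kapQ p.2 : ℚ)))
      * N0 p.1 * N0 p.2

/-- The term `T4` of the paper's genus-one recursion, specialized to `ℙ¹×ℙ¹`. -/
def T4Q (N0 : ℕ × ℕ → ℚ) (β : ℕ × ℕ) : ℚ :=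
  -(1 / 12) * (kapQ β : ℚ) ^ 3 * (4 * (kapQ β : ℚ) - 8) * N0 β

/-- `N1` satisfies the paper's genus-one recursion for `ℙ¹×ℙ¹` with initial conditions
`N1 (1,0) = N1 (0,1) = 0`. -/
def GenusOneRecQ (N0 N1 : ℕ × ℕ → ℚ) : Prop :=
  N1 (1, 0) = 0 ∧ N1 (0, 1) = 0 ∧
  ∀ β : ℕ × ℕ, β ≠ (0, 0) → β ≠ (1, 0) → β ≠ (0, 1) →
    384 * N1 β = T1Q N0 N1 β + T2Q N0 N1 β + T3Q N0 β + T4Q N0 β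

/-- The genus-zero Gromov-Witten invariants of `ℙ¹×ℙ¹` in the low bidegrees
relevant for our computations. -/
def GenusZeroValuesQ (N0 : ℕ × ℕ → ℚ) : Prop :=
  N0 (1, 0) = 1 ∧ N0 (0, 1) = 1 ∧ N0 (2, 0) = 0 ∧ N0 (0, 2) = 0 ∧
  N0 (1, 1) = 1 ∧ N0 (2, 1) = 1 ∧ N0 (1, 2) = 1 ∧ N0 (2, 2) = 12

/-- The genus-one Gromov-Witten invariant of `ℙ¹×ℙ¹` in bidegree (2,1) vanishes. -/
theorem genusOne_P1xP1_bidegree_two_one (N0 N1 : ℕ × ℕ → ℚ)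
    (hN0 : GenusZeroValuesQ N0) (hN1 : GenusOneRecQ N0 N1) :
    N1 (2, 1) = 0 := by
  obtain ⟨h10, h01, h20, h02, h11, h21, h12, h22⟩ := hN0
  obtain ⟨g10, g01, hrec⟩ := hN1
  -- explicit decomposition sets
  have hp20 : pairsQ (2, 0) = {((1,0),(1,0))} := by decide
  have ht20 : triplesQ (2, 0) = ∅ := by decide
  have hp11 : pairsQ (1, 1) = {((1,0),(0,1)), ((0,1),(1,0))} := by decide
  have ht11 : triplesQ (1, 1) = ∅ := by decide
  have hp21 : pairsQ (2, 1) =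
      {((1,0),(1,1)), ((0,1),(2,0)), ((1,1),(1,0)), ((2,0),(0,1))} := by decide
  have ht21 : triplesQ (2, 1) =
      {((1,0),(1,0),(0,1)), ((1,0),(0,1),(1,0)), ((0,1),(1,0),(1,0))} := by decide
  have h11' : N0 1 = 1 := h11
  -- N1 (2,0) = 0
  have g20 : N1 (2, 0) = 0 := by
    have h := hrec (2, 0) (by decide) (by decide) (by decide)
    rw [T1Q, T2Q, T3Q, T4Q, hp20, ht20] at h
    simp only [Finset.sum_insert, Finset.sum_singleton, Finset.sum_empty,
      Finset.mem_insert, Finset.mem_singleton] at h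
    norm_num [triChoose, dotQ, kapQ, h10, h20, g10] at h
    linarith
  -- N1 (1,1) = 0
  have g11 : N1 (1, 1) = 0 := by
    have h := hrec (1, 1) (by decide) (by decide) (by decide)
    rw [T1Q, T2Q, T3Q, T4Q, hp11, ht11] at h
    rw [Finset.sum_insert (by decide), Finset.sum_singleton, Finset.sum_empty] at h
    norm_num [triChoose, dotQ, kapQ, h10, h01, h11, h11', g10, g01] at h
    exact h
  -- N1 (2,1) = 0
  have h := hrec (2, 1) (by decide) (by decide) (by decide)
  rw [T1Q, T2Q, T3Q, T4Q, hp21, ht21] at h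
  rw [Finset.sum_insert (by decide), Finset.sum_insert (by decide),
    Finset.sum_insert (by decide), Finset.sum_singleton,
    Finset.sum_insert (by decide), Finset.sum_insert (by decide),
    Finset.sum_singleton] at h
  have g11' : N1 1 = 0 := g11
  norm_num [triChoose, dotQ, kapQ, h10, h01, h11, h11', h20, h21, g10, g01, g11, g11', g20] at h
  linarith
end
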